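/- arXiv:2203.09061 — 2 statements merged into one kernel-verified Lean document; each statement's English description precedes it below -/
import Mathlib

section
/- Let $\bar u : [0,1] \to \mathbb{R}$ be continuous, let $\bar U_1, \bar U_2 \in \mathbb{R}$, and for $i = 1,2$ let $V_i : [0,1] \to \mathbb{R}$ be continuously differentiable with $V_i'(x) = -f^v(\bar u(x), V_i(x), x)/\lambda^v(x)$ on $[0,1]$ and $V_i(1) = \bar U_i$. Then for every $x \in [0,1]$, $|V_1(x) - V_2(x)| \ge e^{-l_F k_{\Lambda^{-1}}} |\bar U_1 - \bar U_2|$. In particular, the map sending the input $\bar U$ to the predicted boundary value $V(0)$ is injective. -/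
/-- Lower bound on the separation of two solutions of the prediction ODE with different
terminal values; in particular the map `Ū ↦ V(0)` is injective. -/
theorem stmt_3
    (lF kinv : ℝ) (hlF : 0 ≤ lF) (hkinv : 0 < kinv)
    (lamv : ℝ → ℝ) (hlamc : ContinuousOn lamv (Set.Icc 0 1))
    (hlam : ∀ x ∈ Set.Icc (0:ℝ) 1, 1 / kinv ≤ lamv x)
    (fv : ℝ → ℝ → ℝ → ℝ)
    (hfc : ContinuousOn (fun p : ℝ × ℝ × ℝ => fv p.1 p.2.1 p.2.2)
      (Set.univ ×ˢ Set.univ ×ˢ Set.Icc 0 1))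
    (hfl : ∀ u₁ u₂ v₁ v₂ : ℝ, ∀ x ∈ Set.Icc (0:ℝ) 1,
      |fv u₁ v₁ x - fv u₂ v₂ x| ≤ lF * (|u₁ - u₂| + |v₁ - v₂|))
    (ubar : ℝ → ℝ) (hub : ContinuousOn ubar (Set.Icc 0 1))
    (Ubar₁ Ubar₂ : ℝ) (V₁ V₂ : ℝ → ℝ)
    (hV₁ : (∀ x ∈ Set.Icc (0:ℝ) 1,
      HasDerivWithinAt V₁ (-(fv (ubar x) (V₁ x) x) / lamv x) (Set.Icc 0 1) x))
    (hV₂ : (∀ x ∈ Set.Icc (0:ℝ) 1,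
      HasDerivWithinAt V₂ (-(fv (ubar x) (V₂ x) x) / lamv x) (Set.Icc 0 1) x))
    (hV₁1 : V₁ 1 = Ubar₁) (hV₂1 : V₂ 1 = Ubar₂) :
    (∀ x ∈ Set.Icc (0:ℝ) 1,
      Real.exp (-(lF * kinv)) * |Ubar₁ - Ubar₂| ≤ |V₁ x - V₂ x|)
    ∧ (V₁ 0 = V₂ 0 → Ubar₁ = Ubar₂) := by
  have hK : (0:ℝ) ≤ lF * kinv := mul_nonneg hlF hkinv.le
  have key : ∀ x ∈ Set.Icc (0:ℝ) 1,
      Real.exp (-(lF * kinv)) * |Ubar₁ - Ubar₂| ≤ |V₁ x - V₂ x| := by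
    intro x hx
    have hwc : ContinuousOn (fun t => V₁ t - V₂ t) (Set.Icc 0 1) :=
      ContinuousOn.sub (fun t ht => (hV₁ t ht).continuousWithinAt)
        (fun t ht => (hV₂ t ht).continuousWithinAt)
    have hmain : ∀ t ∈ Set.Icc x 1, ‖V₁ t - V₂ t‖ ≤
        gronwallBound ‖V₁ x - V₂ x‖ (lF * kinv) 0 (t - x) := by
      apply norm_le_gronwallBound_of_norm_deriv_right_le (f := fun t => V₁ t - V₂ t)
        (f' := fun t => (-(fv (ubar t) (V₁ t) t) / lamv t) - (-(fv (ubar t) (V₂ t) t) / lamv t))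
      · exact hwc.mono (Set.Icc_subset_Icc hx.1 le_rfl)
      · intro t ht
        have ht' : t ∈ Set.Icc (0:ℝ) 1 := ⟨hx.1.trans ht.1, ht.2.le⟩
        exact ((hV₁ t ht').sub (hV₂ t ht')).mono_of_mem_nhdsWithin
          (Icc_mem_nhdsGE_of_mem ⟨ht'.1, ht.2⟩)
      · exact le_rfl
      · intro t ht
        have ht' : t ∈ Set.Icc (0:ℝ) 1 := ⟨hx.1.trans ht.1, ht.2.le⟩
        have hlam' := hlam t ht'
        have hlampos : 0 < lamv t := lt_of_lt_of_le (by positivity) hlam'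
        have hdiff : (-(fv (ubar t) (V₁ t) t) / lamv t) - (-(fv (ubar t) (V₂ t) t) / lamv t)
            = (fv (ubar t) (V₂ t) t - fv (ubar t) (V₁ t) t) / lamv t := by ring
        rw [Real.norm_eq_abs, hdiff, abs_div, abs_of_pos hlampos]
        have h1 : |fv (ubar t) (V₂ t) t - fv (ubar t) (V₁ t) t| ≤ lF * |V₁ t - V₂ t| := by
          have := hfl (ubar t) (ubar t) (V₂ t) (V₁ t) t ht'
          simpa [sub_self, abs_sub_comm (V₂ t)] using this
        have h2 : (1:ℝ) / lamv t ≤ kinv := by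
          rw [div_le_iff₀ hlampos]
          calc (1:ℝ) = kinv * (1 / kinv) := by field_simp
          _ ≤ kinv * lamv t := by
            exact mul_le_mul_of_nonneg_left hlam' hkinv.le
        calc |fv (ubar t) (V₂ t) t - fv (ubar t) (V₁ t) t| / lamv t
            ≤ (lF * |V₁ t - V₂ t|) / lamv t := by
              gcongr
          _ = (lF * |V₁ t - V₂ t|) * (1 / lamv t) := by ring
          _ ≤ (lF * |V₁ t - V₂ t|) * kinv := by
              exact mul_le_mul_of_nonneg_left h2 (by positivity)
          _ = lF * kinv * ‖V₁ t - V₂ t‖ + 0 := by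
              rw [Real.norm_eq_abs]; ring
    have h1 := hmain 1 ⟨hx.2, le_rfl⟩
    rw [gronwallBound_ε0, Real.norm_eq_abs, Real.norm_eq_abs, hV₁1, hV₂1] at h1
    have hexp : Real.exp (lF * kinv * (1 - x)) ≤ Real.exp (lF * kinv) := by
      apply Real.exp_le_exp.2
      nlinarith [hx.1, hx.2]
    have h2 : |Ubar₁ - Ubar₂| ≤ |V₁ x - V₂ x| * Real.exp (lF * kinv) :=
      h1.trans (mul_le_mul_of_nonneg_left hexp (abs_nonneg _))
    rw [Real.exp_neg]
    rw [inv_mul_le_iff₀ (Real.exp_pos _)] at *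
    · linarith [h2]
  refine ⟨key, fun h0 => ?_⟩
  have := key 0 ⟨le_rfl, zero_le_one⟩
  rw [h0, sub_self, abs_zero] at this
  have habs : |Ubar₁ - Ubar₂| ≤ 0 := by
    nlinarith [Real.exp_pos (-(lF * kinv)), abs_nonneg (Ubar₁ - Ubar₂)]
  have := abs_nonneg (Ubar₁ - Ubar₂)
  have : |Ubar₁ - Ubar₂| = 0 := le_antisymm habs this
  exact sub_eq_zero.1 (abs_eq_zero.1 this)
end

section
/- Let $\bar u_1, \bar u_2 : [0,1] \to \mathbb{R}$ be continuous, let $\bar U \in \mathbb{R}$, and for $i = 1,2$ let $V_i : [0,1] \to \mathbb{R}$ be continuously differentiable with $V_i'(x) = -f^v(\bar u_i(x), V_i(x), x)/\lambda^v(x)$ on $[0,1]$ and $V_i(1) = \bar U$. Then for every $a \in [0,1]$, $\Big| \int_0^{a} \frac{f^v(\bar u_1(x), V_1(x), x) - f^v(\bar u_2(x), V_2(x), x)}{\lambda^v(x)}\, dx \Big| \le l_F\, k_{\Lambda^{-1}} (1 + c_3)\, \sup_{x \in [0,1]} |\bar u_1(x) - \bar u_2(x)|$, where $c_3 = l_F\,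 k_{\Lambda^{-1}}\, e^{l_F k_{\Lambda^{-1}}}$. -/
/-!
The difference `w = V₁ - V₂` vanishes at `x = 1` and, by the Lipschitz bound on `f^v` and
`λ^v ≥ 1 / k`, satisfies `|w'| ≤ K |w| + K M` with `K = l_F k` and `M = sup |ū₁ - ū₂|`.
Grönwall's inequality run backwards from `x = 1` gives `|w| ≤ K e^K M` on `[0, 1]`, so the
integrand is bounded by `K (1 + K e^K) M`, and the interval of integration has length at most `1`.
-/

open Set Real

theorem norm_le_gronwallBound_of_norm_deriv_left_le {E : Type*} [NormedAddCommGroup E]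
    [NormedSpace ℝ E] {f f' : ℝ → E} {δ K ε a b : ℝ}
    (hf : ContinuousOn f (Icc a b)) (hf' : ∀ x ∈ Ioc a b, HasDerivWithinAt f (f' x) (Iic x) x)
    (hb : ‖f b‖ ≤ δ) (bound : ∀ x ∈ Ioc a b, ‖f' x‖ ≤ K * ‖f x‖ + ε) :
    ∀ x ∈ Icc a b, ‖f x‖ ≤ gronwallBound δ K ε (b - x) := by
  have reflect_Icc : MapsTo (b - ·) (Icc 0 (b - a)) (Icc a b) := fun t ht => by
    simp only [mem_Icc] at ht ⊢; constructor <;> linarith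
  have reflect_Ico : ∀ t ∈ Ico 0 (b - a), b - t ∈ Ioc a b := fun t ht => by
    simp only [mem_Ico, mem_Ioc] at ht ⊢; constructor <;> linarith
  have key := norm_le_gronwallBound_of_norm_deriv_right_le (f := fun t => f (b - t))
    (f' := fun t => -f' (b - t)) (a := 0) (b := b - a)
    (hf.comp (by fun_prop) reflect_Icc)
    (fun t ht => by
      have hreflect : HasDerivWithinAt (b - ·) (-1) (Ici t) t :=
        ((hasDerivAt_id t).const_sub b).hasDerivWithinAt
      simpa [Function.comp_def] using (hf' (b - t) (reflect_Ico t ht)).scomp t hreflect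
        fun s (hs : t ≤ s) => show b - s ≤ b - t by linarith)
    (by simpa using hb) (fun t ht => by simpa using bound (b - t) (reflect_Ico t ht))
  intro x hx
  simpa using key (b - x) ⟨by linarith [hx.2], by linarith [hx.1]⟩

theorem gronwallBound_zero_le_mul_exp {K ε t : ℝ} (hK : 0 ≤ K) (hε : 0 ≤ ε) :
    gronwallBound 0 K ε t ≤ ε * t * exp (K * t) := by
  rcases hK.eq_or_lt with rfl | hK
  · simp [gronwallBound_K0]
  · have hexp : exp (K * t) - 1 ≤ K * t * exp (K * t) := by
      -- multiply `1 - K t ≤ exp (-K t)` by `exp (K t)`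
      have h := add_one_le_exp (-(K * t))
      have h2 : exp (-(K * t)) * exp (K * t) = 1 := by rw [← exp_add]; simp
      nlinarith [exp_pos (K * t)]
    rw [gronwallBound_of_K_ne_0 hK.ne']
    dsimp only
    rw [zero_mul, zero_add, div_mul_eq_mul_div, div_le_iff₀ hK]
    calc ε * (exp (K * t) - 1) ≤ ε * (K * t * exp (K * t)) := by gcongr
      _ = _ := by ring

theorem norm_le_mul_exp_of_norm_deriv_le_of_eq_zero_right {E : Type*} [NormedAddCommGroup E]
    [NormedSpace ℝ E] {f f' : ℝ → E} {K ε a b : ℝ} (hK : 0 ≤ K) (hε : 0 ≤ ε)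
    (hf' : ∀ x ∈ Icc a b, HasDerivWithinAt f (f' x) (Icc a b) x) (hb : f b = 0)
    (bound : ∀ x ∈ Icc a b, ‖f' x‖ ≤ K * ‖f x‖ + ε) :
    ∀ x ∈ Icc a b, ‖f x‖ ≤ ε * (b - a) * exp (K * (b - a)) := by
  intro x hx
  have hf : ContinuousOn f (Icc a b) := fun y hy => (hf' y hy).continuousWithinAt
  have hf'_left : ∀ y ∈ Ioc a b, HasDerivWithinAt f (f' y) (Iic y) y := fun y hy =>
    (hf' y (Ioc_subset_Icc_self hy)).mono_of_mem_nhdsWithin (Icc_mem_nhdsLE_of_mem hy)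
  calc ‖f x‖ ≤ gronwallBound 0 K ε (b - x) :=
        norm_le_gronwallBound_of_norm_deriv_left_le hf hf'_left (by simp [hb])
          (fun y hy => bound y (Ioc_subset_Icc_self hy)) x hx
    _ ≤ ε * (b - x) * exp (K * (b - x)) := gronwallBound_zero_le_mul_exp hK hε
    _ ≤ ε * (b - a) * exp (K * (b - a)) := by
        have hab : 0 ≤ b - a := by linarith [hx.1, hx.2]
        have := mul_nonneg hε hab
        gcongr <;> linarith [hx.1]

theorem abs_div_le_mul_abs_of_inv_le {k l : ℝ} (hk : 0 < k) (hl : 1 / k ≤ l) (a : ℝ) :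
    |a / l| ≤ k * |a| := by
  have hl0 : 0 < l := (one_div_pos.mpr hk).trans_le hl
  rw [abs_div, abs_of_pos hl0, div_le_iff₀ hl0]
  have : 1 ≤ k * l := by rwa [div_le_iff₀ hk, mul_comm] at hl
  nlinarith [abs_nonneg a]

theorem abs_intervalIntegral_le_of_abs_le_on_unitInterval {f : ℝ → ℝ} {C a : ℝ}
    (ha : a ∈ Icc (0 : ℝ) 1) (hf : ∀ x ∈ Icc (0 : ℝ) 1, |f x| ≤ C) :
    |∫ x in (0 : ℝ)..a, f x| ≤ C := by
  have hC : 0 ≤ C := (abs_nonneg _).trans (hf 0 ⟨le_rfl, zero_le_one⟩)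
  have hbound : ∀ x ∈ uIoc 0 a, ‖f x‖ ≤ C := fun x hx => by
    rw [uIoc_of_le ha.1] at hx
    exact hf x ⟨hx.1.le, hx.2.trans ha.2⟩
  calc |∫ x in (0 : ℝ)..a, f x| ≤ C * |a - 0| :=
        intervalIntegral.norm_integral_le_of_norm_le_const hbound
    _ ≤ C * 1 := by
        gcongr
        rw [sub_zero, abs_of_nonneg ha.1]
        exact ha.2
    _ = C := mul_one C

theorem stmt_11_general
    (lF kinv : ℝ) (hlF : 0 ≤ lF) (hkinv : 0 < kinv)
    (lamv : ℝ → ℝ)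
    (hlam : ∀ x ∈ Set.Icc (0:ℝ) 1, 1 / kinv ≤ lamv x)
    (fv : ℝ → ℝ → ℝ → ℝ)
    (hfl : ∀ u₁ u₂ v₁ v₂ : ℝ, ∀ x ∈ Set.Icc (0:ℝ) 1,
      |fv u₁ v₁ x - fv u₂ v₂ x| ≤ lF * (|u₁ - u₂| + |v₁ - v₂|))
    (ubar₁ ubar₂ : ℝ → ℝ)
    (hub₁ : ContinuousOn ubar₁ (Set.Icc 0 1)) (hub₂ : ContinuousOn ubar₂ (Set.Icc 0 1))
    (Ubar : ℝ) (V₁ V₂ : ℝ → ℝ)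
    (hV₁ : (∀ x ∈ Set.Icc (0:ℝ) 1,
      HasDerivWithinAt V₁ (-(fv (ubar₁ x) (V₁ x) x) / lamv x) (Set.Icc 0 1) x))
    (hV₂ : (∀ x ∈ Set.Icc (0:ℝ) 1,
      HasDerivWithinAt V₂ (-(fv (ubar₂ x) (V₂ x) x) / lamv x) (Set.Icc 0 1) x))
    (hV₁1 : V₁ 1 = Ubar) (hV₂1 : V₂ 1 = Ubar) :
    ∀ a ∈ Set.Icc (0:ℝ) 1,
      |∫ x in (0:ℝ)..a,
          (fv (ubar₁ x) (V₁ x) x - fv (ubar₂ x) (V₂ x) x) / lamv x|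
        ≤ lF * kinv * (1 + lF * kinv * Real.exp (lF * kinv)) *
          sSup ((fun y => |ubar₁ y - ubar₂ y|) '' Set.Icc (0:ℝ) 1) := by
  intro a ha
  set M := sSup ((fun y => |ubar₁ y - ubar₂ y|) '' Icc (0:ℝ) 1)
  set K := lF * kinv
  have hK : 0 ≤ K := by positivity
  have hM : ∀ x ∈ Icc (0:ℝ) 1, |ubar₁ x - ubar₂ x| ≤ M := fun x hx =>
    le_csSup (isCompact_Icc.bddAbove_image (hub₁.sub hub₂).abs) (mem_image_of_mem _ hx)
  have hM0 : 0 ≤ M := (abs_nonneg _).trans (hM 0 ⟨le_rfl, zero_le_one⟩)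
  have hrhs : ∀ x ∈ Icc (0:ℝ) 1,
      |(fv (ubar₁ x) (V₁ x) x - fv (ubar₂ x) (V₂ x) x) / lamv x|
        ≤ K * |V₁ x - V₂ x| + K * M := by
    intro x hx
    calc _ ≤ kinv * |fv (ubar₁ x) (V₁ x) x - fv (ubar₂ x) (V₂ x) x| :=
          abs_div_le_mul_abs_of_inv_le hkinv (hlam x hx) _
      _ ≤ kinv * (lF * (M + |V₁ x - V₂ x|)) := by
          grw [hfl _ _ _ _ x hx, hM x hx]
      _ = K * |V₁ x - V₂ x| + K * M := by ring
  have hV : ∀ x ∈ Icc (0:ℝ) 1, |V₁ x - V₂ x| ≤ K * exp K * M := by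
    intro x hx
    have := norm_le_mul_exp_of_norm_deriv_le_of_eq_zero_right hK (mul_nonneg hK hM0)
      (fun y hy => (hV₁ y hy).sub (hV₂ y hy)) (by simp [hV₁1, hV₂1])
      (fun y hy => by
        rw [neg_div, neg_div, neg_sub_neg, norm_eq_abs, norm_eq_abs, abs_sub_comm, ← sub_div]
        exact hrhs y hy) x hx
    simpa [mul_right_comm] using this
  refine abs_intervalIntegral_le_of_abs_le_on_unitInterval ha fun x hx => ?_
  calc _ ≤ K * |V₁ x - V₂ x| + K * M := hrhs x hx
    _ ≤ K * (K * exp K * M) + K * M := by grw [hV x hx]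
    _ = K * (1 + K * exp K) * M := by ring

/-- Bound on the integral `I₁` in the proof of Theorem 2. -/
theorem stmt_11
    (lF kinv : ℝ) (hlF : 0 ≤ lF) (hkinv : 0 < kinv)
    (lamv : ℝ → ℝ) (hlamc : ContinuousOn lamv (Set.Icc 0 1))
    (hlam : ∀ x ∈ Set.Icc (0:ℝ) 1, 1 / kinv ≤ lamv x)
    (fv : ℝ → ℝ → ℝ → ℝ)
    (hfc : ContinuousOn (fun p : ℝ × ℝ × ℝ => fv p.1 p.2.1 p.2.2)
      (Set.univ ×ˢ Set.univ ×ˢ Set.Icc 0 1))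
    (hfl : ∀ u₁ u₂ v₁ v₂ : ℝ, ∀ x ∈ Set.Icc (0:ℝ) 1,
      |fv u₁ v₁ x - fv u₂ v₂ x| ≤ lF * (|u₁ - u₂| + |v₁ - v₂|))
    (ubar₁ ubar₂ : ℝ → ℝ)
    (hub₁ : ContinuousOn ubar₁ (Set.Icc 0 1)) (hub₂ : ContinuousOn ubar₂ (Set.Icc 0 1))
    (Ubar : ℝ) (V₁ V₂ : ℝ → ℝ)
    (hV₁ : (∀ x ∈ Set.Icc (0:ℝ) 1,
      HasDerivWithinAt V₁ (-(fv (ubar₁ x) (V₁ x) x) / lamv x) (Set.Icc 0 1) x))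
    (hV₂ : (∀ x ∈ Set.Icc (0:ℝ) 1,
      HasDerivWithinAt V₂ (-(fv (ubar₂ x) (V₂ x) x) / lamv x) (Set.Icc 0 1) x))
    (hV₁1 : V₁ 1 = Ubar) (hV₂1 : V₂ 1 = Ubar) :
    ∀ a ∈ Set.Icc (0:ℝ) 1,
      |∫ x in (0:ℝ)..a,
          (fv (ubar₁ x) (V₁ x) x - fv (ubar₂ x) (V₂ x) x) / lamv x|
        ≤ lF * kinv * (1 + lF * kinv * Real.exp (lF * kinv)) *
          sSup ((fun y => |ubar₁ y - ubar₂ y|) '' Set.Icc (0:ℝ) 1) :=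
  stmt_11_general lF kinv hlF hkinv lamv hlam fv hfl ubar₁ ubar₂ hub₁ hub₂ Ubar V₁ V₂ hV₁ hV₂ hV₁1
    hV₂1
end
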